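/- Let t ∈ (0,1) be rational and u, v ∈ {A,B}⁺. If ρ(u·Z') = t and ρ̄(v·Z') = 1 − t, then u = v. -/

import Mathlib

inductive L3 where
  | A : L3
  | B : L3
  | Z' : L3
deriving DecidableEq

def theta : L3 → ℚ
  | L3.A => 1
  | L3.B => 0
  | L3.Z' => 1

def thetaBar : L3 → ℚ
  | L3.A => 0
  | L3.B => 1
  | L3.Z' => 1

def rho : List L3 → ℚ
  | [] => 0
  | x :: w => theta x * (1/2) + (1/2) * rho w

def rhoBar : List L3 → ℚ
  | [] => 0
  | x :: w => thetaBar x * (1/2) + (1/2) * rhoBar w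


/-!
Reading `ρ(w)` as the binary expansion `0.θ(x₁)θ(x₂)…`, the letters `A, B` are the digits `1, 0`
and the final `Z'` is a terminating digit `1`, so `w ↦ ρ(w·Z')` is injective on `{A,B}*`. On such
words `θ + θ̄ = 1` letterwise, so `ρ̄(v·Z') = 1 − ρ(v·Z')`; hence `ρ(v·Z') = t = ρ(u·Z')` and `u = v`.
-/

lemma theta_eq_zero_or_one (x : L3) : theta x = 0 ∨ theta x = 1 := by
  cases x <;> simp [theta]

lemma theta_injOn : Set.InjOn theta {L3.A, L3.B} := by
  rintro x (rfl | rfl) y (rfl | rfl) h <;> simp_all [theta]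

lemma theta_add_thetaBar {x : L3} (hx : x = L3.A ∨ x = L3.B) : theta x + thetaBar x = 1 := by
  rcases hx with rfl | rfl <;> simp [theta, thetaBar]

lemma rho_nonneg (w : List L3) : 0 ≤ rho w := by
  induction w with
  | nil => simp [rho]
  | cons x w ih => rcases theta_eq_zero_or_one x with hx | hx <;> simp only [rho, hx] <;> linarith

lemma rho_lt_one (w : List L3) : rho w < 1 := by
  induction w with
  | nil => simp [rho]
  | cons x w ih => rcases theta_eq_zero_or_one x with hx | hx <;> simp only [rho, hx] <;> linarith

lemma rho_append_Z'_pos (w : List L3) : 0 < rho (w ++ [L3.Z']) := by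
  induction w with
  | nil => norm_num [rho, theta]
  | cons x w ih =>
    rcases theta_eq_zero_or_one x with hx | hx <;>
      simp only [List.cons_append, rho, hx] <;> linarith

lemma rho_cons_eq_rho_cons {x y : L3} {p q : List L3} (h : rho (x :: p) = rho (y :: q)) :
    theta x = theta y ∧ rho p = rho q := by
  have := rho_nonneg p; have := rho_lt_one p; have := rho_nonneg q; have := rho_lt_one q
  simp only [rho] at h
  rcases theta_eq_zero_or_one x with hx | hx <;> rcases theta_eq_zero_or_one y with hy | hy <;>
    rw [hx, hy] at h ⊢ <;> constructor <;> linarith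

lemma eq_of_rho_append_Z'_eq {u v : List L3} (hu : ∀ x ∈ u, x = L3.A ∨ x = L3.B)
    (hv : ∀ x ∈ v, x = L3.A ∨ x = L3.B) (h : rho (u ++ [L3.Z']) = rho (v ++ [L3.Z'])) :
    u = v := by
  induction u generalizing v with
  | nil =>
    cases v with
    | nil => rfl
    | cons y v => exact absurd (rho_cons_eq_rho_cons h).2 (rho_append_Z'_pos v).ne
  | cons x u ih =>
    cases v with
    | nil => exact absurd (rho_cons_eq_rho_cons h).2 (rho_append_Z'_pos u).ne'
    | cons y v =>
      obtain ⟨hxy, htail⟩ := rho_cons_eq_rho_cons h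
      rw [theta_injOn (hu x List.mem_cons_self) (hv y List.mem_cons_self) hxy,
        ih (fun z hz => hu z (List.mem_cons_of_mem _ hz))
          (fun z hz => hv z (List.mem_cons_of_mem _ hz)) htail]

lemma rho_add_rhoBar_append_Z' {w : List L3} (hw : ∀ x ∈ w, x = L3.A ∨ x = L3.B) :
    rho (w ++ [L3.Z']) + rhoBar (w ++ [L3.Z']) = 1 := by
  induction w with
  | nil => norm_num [rho, rhoBar, theta, thetaBar]
  | cons x w ih =>
    have hsum := ih (fun y hy => hw y (List.mem_cons_of_mem _ hy))
    have hx := theta_add_thetaBar (hw x List.mem_cons_self)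
    simp only [List.cons_append, rho, rhoBar]
    linarith

theorem rho_rhoBar_match_imp_eq_general (t : ℚ) (u v : List L3)
    (hu : ∀ x ∈ u, x = L3.A ∨ x = L3.B) (hv : ∀ x ∈ v, x = L3.A ∨ x = L3.B)
    (h1 : rho (u ++ [L3.Z']) = t) (h2 : rhoBar (v ++ [L3.Z']) = 1 - t) : u = v := by
  have hv' : rho (v ++ [L3.Z']) = t := by linarith [rho_add_rhoBar_append_Z' hv]
  exact eq_of_rho_append_Z'_eq hu hv (h1.trans hv'.symm)

/-- Let t ∈ (0,1) be rational and u, v nonempty words over {A,B}. If ρ(u·Z') = t and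
ρ̄(v·Z') = 1 − t, then u = v. -/
theorem rho_rhoBar_match_imp_eq (t : ℚ) (ht : 0 < t ∧ t < 1) (u v : List L3)
    (hu : ∀ x ∈ u, x = L3.A ∨ x = L3.B) (hv : ∀ x ∈ v, x = L3.A ∨ x = L3.B)
    (hune : u ≠ []) (hvne : v ≠ [])
    (h1 : rho (u ++ [L3.Z']) = t) (h2 : rhoBar (v ++ [L3.Z']) = 1 - t) : u = v :=
  rho_rhoBar_match_imp_eq_general t u v hu hv h1 h2
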